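/- arXiv:2509.00554 — 3 statements merged into one kernel-verified Lean document; each statement's English description precedes it below -/
import Mathlib

section
/- Let $k_0, k_0^\tau, h_0, h_0^\tau \in \mathbb{R}$ with $h_0^\tau \neq 0$. The quartic $Q(\omega) = \omega^4 + [(h_0)^2 - 2k_0 - (h_0^\tau)^2]\omega^2 + (k_0)^2 - (k_0^\tau)^2$ has two distinct positive roots $\omega_{H_1} > \omega_{H_2} > 0$ if and only if $(h_0)^2 < 2k_0 + (h_0^\tau)^2 - 2\sqrt{(k_0)^2 - (k_0^\tau)^2}$ and either (a) $k_0 > |k_0^\tau|$, or (b) $-[(h_0^\tau/2)^2 + (k_0^\tau/h_0^\tau)^2] \le k_0 < -|k_0^\tau|$. -/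
/-!
Substituting `ν = ω²` turns the quartic into the monic quadratic `ν² + bν + c` with
`b = h₀² - 2k₀ - (h₀^τ)²` and `c = k₀² - (k₀^τ)²`, and `ω ↦ ω²` is an order isomorphism of the
positive reals. By Vieta, a monic quadratic has two distinct positive roots iff `c > 0` and
`b < -2√c`. Now `c > 0` says `|k₀| > |k₀^τ|`, and when `k₀ < 0` the condition on `b` forces
`2√c < 2k₀ + (h₀^τ)²`; squaring gives `k₀ > -((h₀^τ/2)² + (k₀^τ/h₀^τ)²)`.
-/

lemma exists_two_pos_roots_quadratic_iff (b c : ℝ) :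
    (∃ ν₁ ν₂ : ℝ, ν₁ > ν₂ ∧ ν₂ > 0 ∧ ν₁ ^ 2 + b * ν₁ + c = 0 ∧ ν₂ ^ 2 + b * ν₂ + c = 0) ↔
      0 < c ∧ b < -2 * √c := by
  constructor
  · rintro ⟨ν₁, ν₂, h₁₂, h₂, e₁, e₂⟩
    have hsum : b = -(ν₁ + ν₂) := by
      have : (ν₁ - ν₂) * (ν₁ + ν₂ + b) = 0 := by linear_combination e₁ - e₂
      rcases mul_eq_zero.mp this with h | h
      · linarith
      · linarith
    have hprod : c = ν₁ * ν₂ := by subst hsum; linear_combination e₂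
    have hc : 0 < c := by rw [hprod]; exact mul_pos (by linarith) h₂
    refine ⟨hc, ?_⟩
    have : √c < (ν₁ + ν₂) / 2 := by
      rw [Real.sqrt_lt' (by linarith), hprod]
      nlinarith [sq_pos_of_pos (sub_pos.mpr h₁₂)]
    linarith
  · rintro ⟨hc, hb⟩
    have hb_neg : b < 0 := by linarith [Real.sqrt_nonneg c]
    have hdisc : 0 < b ^ 2 - 4 * c := by
      nlinarith [Real.sq_sqrt hc.le, Real.sqrt_nonneg c]
    set s := √(b ^ 2 - 4 * c)
    have hs_sq : s ^ 2 = b ^ 2 - 4 * c := Real.sq_sqrt hdisc.le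
    have hs_pos : 0 < s := Real.sqrt_pos.mpr hdisc
    have hs_lt : s < -b := by nlinarith
    refine ⟨(-b + s) / 2, (-b - s) / 2, by linarith, by linarith, ?_, ?_⟩
    · linear_combination hs_sq / 4
    · linear_combination hs_sq / 4

lemma exists_two_pos_sq_iff (p : ℝ → Prop) :
    (∃ ω₁ ω₂ : ℝ, ω₁ > ω₂ ∧ ω₂ > 0 ∧ p (ω₁ ^ 2) ∧ p (ω₂ ^ 2)) ↔
      ∃ ν₁ ν₂ : ℝ, ν₁ > ν₂ ∧ ν₂ > 0 ∧ p ν₁ ∧ p ν₂ := by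
  constructor
  · rintro ⟨ω₁, ω₂, h₁₂, h₂, p₁, p₂⟩
    exact ⟨ω₁ ^ 2, ω₂ ^ 2, by gcongr, by positivity, p₁, p₂⟩
  · rintro ⟨ν₁, ν₂, h₁₂, h₂, p₁, p₂⟩
    refine ⟨√ν₁, √ν₂, Real.sqrt_lt_sqrt h₂.le h₁₂, Real.sqrt_pos.mpr h₂, ?_, ?_⟩
    · rwa [Real.sq_sqrt (by linarith)]
    · rwa [Real.sq_sqrt h₂.le]

lemma exists_two_pos_roots_biquadratic_iff (b c : ℝ) :
    (∃ ω₁ ω₂ : ℝ, ω₁ > ω₂ ∧ ω₂ > 0 ∧ ω₁ ^ 4 + b * ω₁ ^ 2 + c = 0 ∧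
        ω₂ ^ 4 + b * ω₂ ^ 2 + c = 0) ↔
      0 < c ∧ b < -2 * √c := by
  have hpow : ∀ ω : ℝ, ω ^ 4 = (ω ^ 2) ^ 2 := fun ω => by ring
  simp only [hpow]
  rw [exists_two_pos_sq_iff (fun ν => ν ^ 2 + b * ν + c = 0),
    exists_two_pos_roots_quadratic_iff]

lemma sq_sub_sq_pos_iff (k l : ℝ) : 0 < k ^ 2 - l ^ 2 ↔ k > |l| ∨ k < -|l| := by
  rw [sub_pos, sq_lt_sq, lt_abs, lt_neg]

lemma neg_sq_half_add_sq_div_le_of_two_sqrt_lt {k l t : ℝ} (ht : t ≠ 0) (hc : 0 ≤ k ^ 2 - l ^ 2)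
    (h : 2 * √(k ^ 2 - l ^ 2) < 2 * k + t ^ 2) :
    -((t / 2) ^ 2 + (l / t) ^ 2) ≤ k := by
  have hsq : 4 * (k ^ 2 - l ^ 2) < (2 * k + t ^ 2) ^ 2 := by
    nlinarith [Real.sq_sqrt hc, Real.sqrt_nonneg (k ^ 2 - l ^ 2)]
  have hkey : 0 ≤ 4 * k * t ^ 2 + t ^ 4 + 4 * l ^ 2 := by nlinarith
  have heq : -((t / 2) ^ 2 + (l / t) ^ 2) =
      k - (4 * k * t ^ 2 + t ^ 4 + 4 * l ^ 2) / (4 * t ^ 2) := by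
    field_simp
    ring
  rw [heq]
  linarith [div_nonneg hkey (by positivity : (0 : ℝ) ≤ 4 * t ^ 2)]

theorem stmt_2 (k0 k0τ h0 h0τ : ℝ) (hτ : h0τ ≠ 0) :
    (∃ ωH1 ωH2 : ℝ, ωH1 > ωH2 ∧ ωH2 > 0 ∧
        ωH1^4 + (h0^2 - 2*k0 - h0τ^2) * ωH1^2 + k0^2 - k0τ^2 = 0 ∧
        ωH2^4 + (h0^2 - 2*k0 - h0τ^2) * ωH2^2 + k0^2 - k0τ^2 = 0) ↔
      (h0^2 < 2*k0 + h0τ^2 - 2 * Real.sqrt (k0^2 - k0τ^2) ∧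
        (k0 > |k0τ| ∨
          (-((h0τ/2)^2 + (k0τ/h0τ)^2) ≤ k0 ∧ k0 < -|k0τ|))) := by
  have hroots :=
    exists_two_pos_roots_biquadratic_iff (h0 ^ 2 - 2 * k0 - h0τ ^ 2) (k0 ^ 2 - k0τ ^ 2)
  simp only [← add_sub_assoc] at hroots
  rw [hroots]
  constructor
  · rintro ⟨hc, hb⟩
    refine ⟨by linarith, ?_⟩
    rcases (sq_sub_sq_pos_iff k0 k0τ).mp hc with hk | hk
    · exact Or.inl hk
    · exact Or.inr ⟨neg_sq_half_add_sq_div_le_of_two_sqrt_lt hτ hc.le (by linarith [sq_nonneg h0]), hk⟩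
  · rintro ⟨hb, hk⟩
    exact ⟨(sq_sub_sq_pos_iff k0 k0τ).mpr (hk.imp id And.right), by linarith⟩
end

section
/- Let $a, b \in \mathbb{R}$ with $a > |b| \ge 0$ and $h_0, h_0^\tau \in \mathbb{R}$ with $(h_0)^2 > 2a + (h_0^\tau)^2 - 2\sqrt{a^2 - b^2}$. Then for every $\omega \in \mathbb{R}$, $(\omega^2 - a)^2 + (\omega h_0)^2 > b^2 + (\omega h_0^\tau)^2$. -/
/-! With `x = ω²` and `s = √(a² - b²)`, the difference of the two sides is
`x² - (2a + (h₀^τ)² - h₀²) x + s² = (x - s)² + (h₀² - (2a + (h₀^τ)² - 2s)) x`,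
a sum of a square and a nonnegative term, which cannot both vanish since `s > 0`. -/

theorem sq_sub_mul_add_sq_pos {s c x : ℝ} (hs : 0 < s) (hc : c < 2 * s) (hx : 0 ≤ x) :
    0 < x ^ 2 - c * x + s ^ 2 := by
  rcases hx.eq_or_lt with rfl | hx
  · simpa using pow_pos hs 2
  · nlinarith [sq_nonneg (x - s), mul_pos hx (sub_pos.mpr hc)]

theorem stmt_12 (a b h0 h0τ : ℝ) (hab : a > |b|)
    (hh : h0^2 > 2*a + h0τ^2 - 2 * Real.sqrt (a^2 - b^2)) :
    ∀ ω : ℝ, (ω^2 - a)^2 + (ω * h0)^2 > b^2 + (ω * h0τ)^2 := by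
  intro ω
  obtain ⟨hb_lower, hb_upper⟩ := abs_lt.mp hab
  have hdisc : 0 < a ^ 2 - b ^ 2 := sub_pos.mpr (sq_lt_sq' hb_lower hb_upper)
  set s := Real.sqrt (a ^ 2 - b ^ 2)
  have hs_sq : s ^ 2 = a ^ 2 - b ^ 2 := Real.sq_sqrt hdisc.le
  have hquad := sq_sub_mul_add_sq_pos (Real.sqrt_pos.mpr hdisc)
    (c := 2 * a + h0τ ^ 2 - h0 ^ 2) (by linarith) (sq_nonneg ω)
  have hdiff : (ω ^ 2 - a) ^ 2 + (ω * h0) ^ 2 - (b ^ 2 + (ω * h0τ) ^ 2)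
      = (ω ^ 2) ^ 2 - (2 * a + h0τ ^ 2 - h0 ^ 2) * ω ^ 2 + s ^ 2 := by
    rw [hs_sq]; ring
  linarith
end

section
/- Let $k_0 > 0$, $h_0 > 0$, $k_0^\tau, h_0^\tau \in \mathbb{R}$ satisfy $k_0 > |k_0^\tau|$ and $(h_0)^2 > 2k_0 + (h_0^\tau)^2 - 2\sqrt{(k_0)^2 - (k_0^\tau)^2}$. Then for every $\tau \ge 0$, the characteristic equation $\mu^2 + h_0\mu + h_0^\tau\mu e^{-\mu\tau} + k_0 + k_0^\tau e^{-\mu\tau} = 0$ has no purely imaginary root $\mu = i\omega$, $\omega \in \mathbb{R}$. -/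
/-!
Taking moduli in the characteristic equation at `μ = iω` (where `|e^{-iωτ}| = 1`) gives
`(k₀ - ω²)² + (h₀ω)² = (k₀^τ)² + (h₀^τ ω)²`, i.e. `x² + b x + s² = 0` for `x = ω² ≥ 0`,
`b = h₀² - 2k₀ - (h₀^τ)²` and `s = √(k₀² - (k₀^τ)²) > 0`. The hypothesis `b > -2s` makes this
quadratic exceed `(x - s)² ≥ 0` for `x > 0`, and it equals `s² > 0` at `x = 0`.
-/

lemma sq_add_mul_add_sq_pos {x b s : ℝ} (hx : 0 ≤ x) (hs : 0 < s) (hb : -(2 * s) < b) :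
    0 < x ^ 2 + b * x + s ^ 2 := by
  rcases hx.eq_or_lt with rfl | hx
  · simpa using pow_pos hs 2
  · nlinarith [sq_nonneg (x - s)]

lemma sq_add_sq_eq_of_char_eq_zero {k h kτ hτ ω : ℝ} {z : ℂ} (hz : ‖z‖ = 1)
    (hroot : (Complex.I * ω) ^ 2 + h * (Complex.I * ω) + hτ * (Complex.I * ω) * z
      + k + kτ * z = 0) :
    (k - ω ^ 2) ^ 2 + (h * ω) ^ 2 = kτ ^ 2 + (hτ * ω) ^ 2 := by
  have hsplit : ((k - ω ^ 2 : ℝ) : ℂ) + ((h * ω : ℝ) : ℂ) * Complex.I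
      = -((kτ + ((hτ * ω : ℝ) : ℂ) * Complex.I) * z) := by
    push_cast
    linear_combination hroot - (ω : ℂ) ^ 2 * Complex.I_sq
  have hnorm := congrArg (‖·‖ ^ 2) hsplit
  simpa only [norm_neg, norm_mul, hz, mul_one, Complex.sq_norm, Complex.normSq_add_mul_I]
    using hnorm

theorem stmt_18_general (k0 h0 k0τ h0τ : ℝ)
    (hk : k0 > |k0τ|)
    (hh : h0^2 > 2*k0 + h0τ^2 - 2 * Real.sqrt (k0^2 - k0τ^2)) :
    ∀ τ : ℝ, 0 ≤ τ → ∀ ω : ℝ,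
      (Complex.I * ω)^2 + h0 * (Complex.I * ω)
        + h0τ * (Complex.I * ω) * Complex.exp (-(Complex.I * ω) * τ)
        + k0 + k0τ * Complex.exp (-(Complex.I * ω) * τ) ≠ 0 := by
  intro τ _ ω hroot
  have hz : ‖Complex.exp (-(Complex.I * ω) * τ)‖ = 1 := by
    rw [Complex.norm_exp]
    simp
  have hmod := sq_add_sq_eq_of_char_eq_zero hz hroot
  have hdisc : 0 < k0 ^ 2 - k0τ ^ 2 := by
    nlinarith [sq_abs k0τ, abs_nonneg k0τ]
  have hs := Real.sq_sqrt hdisc.le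
  have hpos := sq_add_mul_add_sq_pos (sq_nonneg ω) (Real.sqrt_pos.2 hdisc)
    (b := h0 ^ 2 - 2 * k0 - h0τ ^ 2) (by linarith)
  linarith

theorem stmt_18 (k0 h0 k0τ h0τ : ℝ) (hk0 : 0 < k0) (hh0 : 0 < h0)
    (hk : k0 > |k0τ|)
    (hh : h0^2 > 2*k0 + h0τ^2 - 2 * Real.sqrt (k0^2 - k0τ^2)) :
    ∀ τ : ℝ, 0 ≤ τ → ∀ ω : ℝ,
      (Complex.I * ω)^2 + h0 * (Complex.I * ω)
        + h0τ * (Complex.I * ω) * Complex.exp (-(Complex.I * ω) * τ)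
        + k0 + k0τ * Complex.exp (-(Complex.I * ω) * τ) ≠ 0 :=
  stmt_18_general k0 h0 k0τ h0τ hk hh
end
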